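/- With v_1 defined by the recursive Mex algorithm, for every n ≥ 0 one has v_1(n+1) - v_1(n) ∈ {1, 2, 3, 4}. -/

import Mathlib

/-- Minimum excluded value of a set of natural numbers. -/
noncomputable def mex (S : Set ℕ) : ℕ := sInf {m : ℕ | m ∉ S}

/-- Coordinates of a set of triples. -/
def coords (G : Set (ℕ × ℕ × ℕ)) : Set ℕ :=
  {k | ∃ x ∈ G, k = x.1 ∨ k = x.2.1 ∨ k = x.2.2}

/-- Pairwise coordinate differences of a set of triples. -/
def diffs (G : Set (ℕ × ℕ × ℕ)) : Set ℕ :=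
  {d | ∃ x ∈ G, d = x.2.1 - x.1 ∨ d = x.2.2 - x.2.1 ∨ d = x.2.2 - x.1}

/-- One step of the Mex algorithm: the next P-position. -/
noncomputable def step (G : Set (ℕ × ℕ × ℕ)) : ℕ × ℕ × ℕ :=
  let F := coords G
  let D := diffs G
  let a := mex F
  let b := mex ((fun d => a + d) '' D ∪ Set.Icc 1 a ∪ F)
  let c := mex ((fun d => b + d) '' D ∪ Set.Icc 1 b ∪ F)
  (a, b, c)

/-- The sets `G_n` of P-positions computed by the Mex algorithm. -/
noncomputable def Gset : ℕ → Set (ℕ × ℕ × ℕ)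
  | 0 => {(0, 0, 0)}
  | n + 1 => Gset n ∪ {step (Gset n)}

/-- The `n`-th P-position `(v_1(n), v_2(n), v_3(n))`. -/
noncomputable def v : ℕ → ℕ × ℕ × ℕ
  | 0 => (0, 0, 0)
  | n + 1 => step (Gset n)

noncomputable def v1 (n : ℕ) : ℕ := (v n).1
noncomputable def v2 (n : ℕ) : ℕ := (v n).2.1
noncomputable def v3 (n : ℕ) : ℕ := (v n).2.2

/-- `F_n`: the set of coordinates of elements of `G_n`. -/
noncomputable def Fset (n : ℕ) : Set ℕ := coords (Gset n)

/-- `D_n`: the set of pairwise coordinate differences over `G_n`. -/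
noncomputable def Dset (n : ℕ) : Set ℕ := diffs (Gset n)

/-!
Write `diff12 = v2 - v1`, `diff23 = v3 - v2`, `diff13 = v3 - v1`. By induction on `n`, `v1`,
`diff12` and `diff23` are strictly increasing on `[0, n]` and `D_n` contains every number up to
`max (diff12 n) (diff23 n)`. Consequently `v2` grows by at least 2 and `v3` by at least 3 per
step, and the elements of `D_n` above that maximum are `diff13`-values, which are 2 apart.
With `h = mex D_n`, the new position has `diff23 (n+1) = h`, and `diff12 (n+1)` is at most the
first non-element of `D_n` after `h` (which is `≤ h + 2`): if `v1 (n+1) + h` is already a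
coordinate, it is a `v3`-value, and `v3`-values are 3 apart. This keeps `D_{n+1}` an initial
segment.

Finally `v1 (n+1) = mex F_n > v1 n`, and `v1 n + 1, …, v1 n + 4` cannot all lie in `F_n`: they
would be `v2`- or `v3`-values, and four consecutive numbers are never covered by a 2-separated
set together with a 3-separated one.
-/

open Set

noncomputable def diff12 (k : ℕ) : ℕ := v2 k - v1 k
noncomputable def diff23 (k : ℕ) : ℕ := v3 k - v2 k
noncomputable def diff13 (k : ℕ) : ℕ := v3 k - v1 k

lemma mex_notMem {S : Set ℕ} (hS : S.Finite) : mex S ∉ S :=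
  Nat.sInf_mem hS.exists_notMem

lemma mex_le_of_notMem {S : Set ℕ} {x : ℕ} (hx : x ∉ S) : mex S ≤ x :=
  Nat.sInf_le hx

lemma mem_of_lt_mex {S : Set ℕ} {x : ℕ} (h : x < mex S) : x ∈ S :=
  not_not.1 (Nat.notMem_of_lt_sInf h)

lemma isLeast_mex_shift {D F : Set ℕ} (hD : D.Finite) (hF : F.Finite) (h0 : 0 ∈ F) (t : ℕ) :
    IsLeast {y | t < y ∧ y ∉ F ∧ y - t ∉ D} (mex ((fun d => t + d) '' D ∪ Icc 1 t ∪ F)) := by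
  set S := (fun d => t + d) '' D ∪ Icc 1 t ∪ F
  have hm : mex S ∉ S := mex_notMem (((hD.image _).union (finite_Icc 1 t)).union hF)
  simp only [S, mem_union, mem_image, mem_Icc, not_or, not_exists, not_and] at hm
  obtain ⟨⟨hmD, hmt⟩, hmF⟩ := hm
  have ht : t < mex S := by
    rcases Nat.eq_zero_or_pos (mex S) with h | h
    · exact absurd (h ▸ h0) hmF
    · exact Nat.lt_of_not_le (hmt h)
  refine ⟨⟨ht, hmF, fun h => hmD _ h (Nat.add_sub_of_le ht.le)⟩, fun y ⟨hty, hyF, hyD⟩ => mex_le_of_notMem ?_⟩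
  simp only [S, mem_union, mem_image, mem_Icc, not_or, not_exists, not_and]
  exact ⟨⟨fun d hd hdy => hyD (by rwa [← hdy, Nat.add_sub_cancel_left]), by omega⟩, hyF⟩

lemma Gset_eq_image (n : ℕ) : Gset n = v '' Iic n := by
  induction n with
  | zero => ext x; simp [Gset, v, eq_comm]
  | succ n ih =>
    change Gset n ∪ {v (n + 1)} = _
    ext x
    simp only [ih, mem_union, mem_image, mem_Iic, mem_singleton_iff, Nat.le_succ_iff]
    grind

lemma mem_Fset {n x : ℕ} : x ∈ Fset n ↔ ∃ k ≤ n, x = v1 k ∨ x = v2 k ∨ x = v3 k := by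
  simp [Fset, coords, Gset_eq_image, v1, v2, v3]

lemma mem_Dset {n x : ℕ} : x ∈ Dset n ↔ ∃ k ≤ n, x = diff12 k ∨ x = diff23 k ∨ x = diff13 k := by
  simp [Dset, diffs, Gset_eq_image, diff12, diff23, diff13, v1, v2, v3]

lemma Fset_finite (n : ℕ) : (Fset n).Finite :=
  ((finite_Iic n).biUnion fun k _ => toFinite {v1 k, v2 k, v3 k}).subset fun x hx => by
    obtain ⟨k, hk, hx⟩ := mem_Fset.1 hx
    exact mem_biUnion (mem_Iic.2 hk) (by simpa using hx)

lemma Dset_finite (n : ℕ) : (Dset n).Finite :=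
  ((finite_Iic n).biUnion fun k _ => toFinite {diff12 k, diff23 k, diff13 k}).subset fun x hx => by
    obtain ⟨k, hk, hx⟩ := mem_Dset.1 hx
    exact mem_biUnion (mem_Iic.2 hk) (by simpa using hx)

lemma coords_mono {G G' : Set (ℕ × ℕ × ℕ)} (h : G ⊆ G') : coords G ⊆ coords G' :=
  fun _ ⟨x, hx, hk⟩ => ⟨x, h hx, hk⟩

lemma diffs_mono {G G' : Set (ℕ × ℕ × ℕ)} (h : G ⊆ G') : diffs G ⊆ diffs G' :=
  fun _ ⟨x, hx, hd⟩ => ⟨x, h hx, hd⟩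

lemma Fset_subset_succ (n : ℕ) : Fset n ⊆ Fset (n + 1) := coords_mono subset_union_left

lemma Dset_subset_succ (n : ℕ) : Dset n ⊆ Dset (n + 1) := diffs_mono subset_union_left

lemma zero_mem_Fset (n : ℕ) : 0 ∈ Fset n := mem_Fset.2 ⟨0, n.zero_le, Or.inl rfl⟩

lemma v1_succ (n : ℕ) : v1 (n + 1) = mex (Fset n) := rfl

lemma isLeast_v2_succ (n : ℕ) :
    IsLeast {y | v1 (n + 1) < y ∧ y ∉ Fset n ∧ y - v1 (n + 1) ∉ Dset n} (v2 (n + 1)) :=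
  isLeast_mex_shift (Dset_finite n) (Fset_finite n) (zero_mem_Fset n) _

lemma isLeast_v3_succ (n : ℕ) :
    IsLeast {y | v2 (n + 1) < y ∧ y ∉ Fset n ∧ y - v2 (n + 1) ∉ Dset n} (v3 (n + 1)) :=
  isLeast_mex_shift (Dset_finite n) (Fset_finite n) (zero_mem_Fset n) _

lemma v1_le_v2 : ∀ n, v1 n ≤ v2 n
  | 0 => le_rfl
  | n + 1 => (isLeast_v2_succ n).1.1.le

lemma v2_le_v3 : ∀ n, v2 n ≤ v3 n
  | 0 => le_rfl
  | n + 1 => (isLeast_v3_succ n).1.1.le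

def Spaced (c : ℕ) (f : ℕ → ℕ) (n : ℕ) : Prop :=
  ∀ j k, j < k → k ≤ n → f j + c ≤ f k

namespace Spaced

variable {c c' n : ℕ} {f g : ℕ → ℕ}

lemma zero : Spaced c f 0 := fun _ _ hjk hk => absurd hjk (by omega)

lemma le (h : Spaced c f n) {k : ℕ} (hk : k ≤ n) : f k ≤ f n := by
  rcases hk.lt_or_eq with hk | rfl
  · exact le_of_add_le_left (h k n hk le_rfl)
  · exact le_rfl

lemma succ (h : Spaced c f n) (hn : f n + c ≤ f (n + 1)) : Spaced c f (n + 1) := by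
  intro j k hjk hk
  rcases hk.lt_or_eq with hk | rfl
  · exact h j k hjk (by omega)
  · have := h.le (k := j) (by omega)
    omega

lemma add (hf : Spaced c f n) (hg : Spaced c' g n) : Spaced (c + c') (fun k => f k + g k) n :=
  fun j k hjk hk => by
    have := hf j k hjk hk
    have := hg j k hjk hk
    dsimp only
    omega

lemma add_le_of_mem_image (h : Spaced c f n) {a b : ℕ} (ha : a ∈ f '' Iic n)
    (hb : b ∈ f '' Iic n) (hab : a < b) : a + c ≤ b := by
  obtain ⟨j, hj, rfl⟩ := ha
  obtain ⟨k, hk, rfl⟩ := hb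
  rcases lt_trichotomy j k with hjk | rfl | hjk
  · exact h j k hjk hk
  · exact absurd hab (lt_irrefl _)
  · have := h k j hjk hj
    omega

end Spaced

lemma not_Icc_subset_union_of_spaced {A B : Set ℕ}
    (hA : ∀ a ∈ A, ∀ b ∈ A, a < b → a + 2 ≤ b) (hB : ∀ a ∈ B, ∀ b ∈ B, a < b → a + 3 ≤ b)
    (x : ℕ) : ¬ Icc (x + 1) (x + 4) ⊆ A ∪ B := by
  intro h
  have mem : ∀ i, 1 ≤ i → i ≤ 4 → x + i ∈ A ∪ B := fun i h1 h4 => h ⟨by omega, by omega⟩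
  rcases mem 2 (by norm_num) (by norm_num) with h2 | h2 <;>
    rcases mem 3 (by norm_num) (by norm_num) with h3 | h3
  · exact absurd (hA _ h2 _ h3 (by omega)) (by omega)
  · rcases mem 1 le_rfl (by norm_num) with h1 | h1
    · exact absurd (hA _ h1 _ h2 (by omega)) (by omega)
    · exact absurd (hB _ h1 _ h3 (by omega)) (by omega)
  · rcases mem 4 (by norm_num) le_rfl with h4 | h4
    · exact absurd (hA _ h3 _ h4 (by omega)) (by omega)
    · exact absurd (hB _ h2 _ h4 (by omega)) (by omega)
  · exact absurd (hB _ h2 _ h3 (by omega)) (by omega)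

lemma Iic_v1_subset_Fset : ∀ n, Iic (v1 n) ⊆ Fset n
  | 0 => fun k hk => (Nat.le_zero.1 hk) ▸ zero_mem_Fset 0
  | n + 1 => fun k hk => by
    rcases (mem_Iic.1 hk).lt_or_eq with hk | rfl
    · exact Fset_subset_succ n (mem_of_lt_mex hk)
    · exact mem_Fset.2 ⟨n + 1, le_rfl, Or.inl rfl⟩

lemma v1_lt_v1_succ (n : ℕ) : v1 n < v1 (n + 1) :=
  Nat.lt_of_not_le fun h => mex_notMem (Fset_finite n) (Iic_v1_subset_Fset n h)

lemma mex_Dset_le_diff12_succ (n : ℕ) : mex (Dset n) ≤ diff12 (n + 1) :=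
  mex_le_of_notMem (isLeast_v2_succ n).1.2.2

lemma mex_Dset_le_diff23_succ (n : ℕ) : mex (Dset n) ≤ diff23 (n + 1) :=
  mex_le_of_notMem (isLeast_v3_succ n).1.2.2

structure Invariant (n : ℕ) : Prop where
  spaced_v1 : Spaced 1 v1 n
  spaced_diff12 : Spaced 1 diff12 n
  spaced_diff23 : Spaced 1 diff23 n
  Iic_subset_Dset : Iic (max (diff12 n) (diff23 n)) ⊆ Dset n

namespace Invariant

variable {n : ℕ}

lemma zero : Invariant 0 where
  spaced_v1 := Spaced.zero
  spaced_diff12 := Spaced.zero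
  spaced_diff23 := Spaced.zero
  Iic_subset_Dset k hk := by
    obtain rfl : k = 0 := Nat.le_zero.1 hk
    exact mem_Dset.2 ⟨0, le_rfl, Or.inl rfl⟩

lemma spaced_v2 (I : Invariant n) : Spaced 2 v2 n := by
  have h : (fun k => v1 k + diff12 k) = v2 :=
    funext fun k => by have := v1_le_v2 k; unfold diff12; omega
  exact h ▸ I.spaced_v1.add I.spaced_diff12

lemma spaced_v3 (I : Invariant n) : Spaced 3 v3 n := by
  have h : (fun k => v2 k + diff23 k) = v3 :=
    funext fun k => by have := v2_le_v3 k; unfold diff23; omega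
  exact h ▸ I.spaced_v2.add I.spaced_diff23

lemma spaced_diff13 (I : Invariant n) : Spaced 2 diff13 n := by
  have h : (fun k => diff12 k + diff23 k) = diff13 :=
    funext fun k => by have := v1_le_v2 k; have := v2_le_v3 k; unfold diff12 diff23 diff13; omega
  exact h ▸ I.spaced_diff12.add I.spaced_diff23

lemma le_v3_of_mem_Fset (I : Invariant n) {x : ℕ} (hx : x ∈ Fset n) : x ≤ v3 n := by
  obtain ⟨k, hk, hx⟩ := mem_Fset.1 hx
  have := I.spaced_v3.le hk
  have := v1_le_v2 k
  have := v2_le_v3 k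
  omega

lemma mem_image_v3_of_mem_Fset (I : Invariant n) {x : ℕ} (hx : x ∈ Fset n) (hlt : v2 n < x) :
    x ∈ v3 '' Iic n := by
  obtain ⟨k, hk, hx | hx | hx⟩ := mem_Fset.1 hx
  · have := I.spaced_v1.le hk
    have := v1_le_v2 n
    omega
  · have := I.spaced_v2.le hk
    omega
  · exact ⟨k, hk, hx.symm⟩

lemma mem_image_diff13_of_mem_Dset (I : Invariant n) {x : ℕ} (hx : x ∈ Dset n)
    (hlt : max (diff12 n) (diff23 n) < x) : x ∈ diff13 '' Iic n := by
  obtain ⟨k, hk, hx | hx | hx⟩ := mem_Dset.1 hx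
  · have := I.spaced_diff12.le hk
    omega
  · have := I.spaced_diff23.le hk
    omega
  · exact ⟨k, hk, hx.symm⟩

lemma max_lt_mex_Dset (I : Invariant n) : max (diff12 n) (diff23 n) < mex (Dset n) :=
  Nat.lt_of_not_le fun h => mex_notMem (Dset_finite n) (I.Iic_subset_Dset h)

lemma diff23_succ (I : Invariant n) : diff23 (n + 1) = mex (Dset n) := by
  refine le_antisymm ?_ (mex_Dset_le_diff23_succ n)
  have hmax := I.max_lt_mex_Dset
  have h12 := mex_Dset_le_diff12_succ n
  have h1 := v1_lt_v1_succ n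
  have := v1_le_v2 n
  have := v2_le_v3 n
  have := v1_le_v2 (n + 1)
  suffices v3 (n + 1) ≤ v2 (n + 1) + mex (Dset n) by unfold diff23; omega
  refine (isLeast_v3_succ n).2 ⟨by omega, fun hF => ?_, ?_⟩
  · have := I.le_v3_of_mem_Fset hF
    unfold diff12 diff23 at *
    omega
  · rw [Nat.add_sub_cancel_left]
    exact mex_notMem (Dset_finite n)

lemma exists_notMem_Dset (I : Invariant n) :
    ∃ m, mex (Dset n) < m ∧ m ≤ mex (Dset n) + 2 ∧ m ∉ Dset n ∧ Ioo (mex (Dset n)) m ⊆ Dset n := by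
  have hmax := I.max_lt_mex_Dset
  by_cases h1 : mex (Dset n) + 1 ∈ Dset n
  · refine ⟨mex (Dset n) + 2, by omega, le_rfl, fun h2 => ?_, fun k hk => ?_⟩
    · have := I.spaced_diff13.add_le_of_mem_image (I.mem_image_diff13_of_mem_Dset h1 (by omega))
        (I.mem_image_diff13_of_mem_Dset h2 (by omega)) (by omega)
      omega
    · obtain rfl : k = mex (Dset n) + 1 := by have := hk.1; have := hk.2; omega
      exact h1
  · exact ⟨_, by omega, by omega, h1, fun k hk => absurd hk.2 (by have := hk.1; omega)⟩

lemma diff12_succ_le (I : Invariant n) {m : ℕ} (hm : mex (Dset n) < m)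
    (hm2 : m ≤ mex (Dset n) + 2) (hmD : m ∉ Dset n) : diff12 (n + 1) ≤ m := by
  have hmax := I.max_lt_mex_Dset
  have h1 := v1_lt_v1_succ n
  have := v1_le_v2 n
  have := v1_le_v2 (n + 1)
  have hb := (isLeast_v2_succ n).2
  suffices v2 (n + 1) ≤ v1 (n + 1) + m by unfold diff12; omega
  by_cases hF : v1 (n + 1) + mex (Dset n) ∈ Fset n
  · refine hb ⟨by omega, fun hF' => ?_, by rwa [Nat.add_sub_cancel_left]⟩
    have hv2 : v2 n < v1 (n + 1) + mex (Dset n) := by unfold diff12 at hmax; omega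
    have := I.spaced_v3.add_le_of_mem_image (I.mem_image_v3_of_mem_Fset hF hv2)
      (I.mem_image_v3_of_mem_Fset hF' (by omega)) (by omega)
    omega
  · have := hb ⟨by omega, hF, by rw [Nat.add_sub_cancel_left]; exact mex_notMem (Dset_finite n)⟩
    omega

lemma Iic_succ_subset_Dset (I : Invariant n) :
    Iic (max (diff12 (n + 1)) (diff23 (n + 1))) ⊆ Dset (n + 1) := by
  obtain ⟨m, hm, hm2, hmD, hgap⟩ := I.exists_notMem_Dset
  have h12 := I.diff12_succ_le hm hm2 hmD
  have h23 := I.diff23_succ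
  rw [max_eq_left (h23 ▸ mex_Dset_le_diff12_succ n)]
  intro k hk
  rcases lt_trichotomy k (mex (Dset n)) with hk' | rfl | hk'
  · exact Dset_subset_succ n (mem_of_lt_mex hk')
  · exact h23 ▸ mem_Dset.2 ⟨n + 1, le_rfl, Or.inr (Or.inl rfl)⟩
  · rcases (mem_Iic.1 hk).lt_or_eq with hk | rfl
    · exact Dset_subset_succ n (hgap ⟨hk', by omega⟩)
    · exact mem_Dset.2 ⟨n + 1, le_rfl, Or.inl rfl⟩

lemma succ (I : Invariant n) : Invariant (n + 1) where
  spaced_v1 := I.spaced_v1.succ (v1_lt_v1_succ n)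
  spaced_diff12 := I.spaced_diff12.succ
    (((le_max_left _ _).trans_lt I.max_lt_mex_Dset).trans_le (mex_Dset_le_diff12_succ n))
  spaced_diff23 := I.spaced_diff23.succ (I.diff23_succ ▸ (le_max_right _ _).trans_lt I.max_lt_mex_Dset)
  Iic_subset_Dset := I.Iic_succ_subset_Dset

lemma v1_succ_le_add_four (I : Invariant n) : v1 (n + 1) ≤ v1 n + 4 := by
  by_contra hlt
  refine not_Icc_subset_union_of_spaced (fun a ha b hb => I.spaced_v2.add_le_of_mem_image ha hb)
    (fun a ha b hb => I.spaced_v3.add_le_of_mem_image ha hb) (v1 n) fun y hy => ?_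
  have hy' : y < mex (Fset n) := by rw [← v1_succ]; have := hy.2; omega
  obtain ⟨k, hk, hyk | hyk | hyk⟩ := mem_Fset.1 (mem_of_lt_mex hy')
  · have := I.spaced_v1.le hk
    have := hy.1
    omega
  · exact Or.inl ⟨k, hk, hyk.symm⟩
  · exact Or.inr ⟨k, hk, hyk.symm⟩

end Invariant

lemma invariant : ∀ n, Invariant n
  | 0 => .zero
  | n + 1 => (invariant n).succ

theorem stmt10 : ∀ n : ℕ, (v1 (n + 1) : ℤ) - v1 n ∈ ({1, 2, 3, 4} : Set ℤ) := by
  intro n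
  have hlt := v1_lt_v1_succ n
  have hle := (invariant n).v1_succ_le_add_four
  simp only [mem_insert_iff, mem_singleton_iff]
  omega
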